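/- Let E be a real normed space and K ⊆ E a nontrivial cone with norm-base B_K. If the weak closure cl_w B_K is weakly compact, then the following three conditions are pairwise equivalent: (1) K^{w#} ≠ ∅; (2) K^{aw#} ≠ ∅; (3) 0 ∉ cl S_K, where S_K = conv(B_K) and cl denotes norm closure. -/

import Mathlib

open Set

variable {E : Type*} [NormedAddCommGroup E] [NormedSpace ℝ E]

/-- `K` is a cone: contains `0` and is closed under nonnegative scalar multiplication. -/
def IsCone (K : Set E) : Prop :=
  (0 : E) ∈ K ∧ ∀ t : ℝ, 0 ≤ t → ∀ x ∈ K, t • x ∈ K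

/-- A cone is nontrivial if it is neither `{0}` nor the whole space. -/
def IsNontrivialCone (K : Set E) : Prop :=
  IsCone K ∧ K ≠ {0} ∧ K ≠ Set.univ

/-- The norm-base of a cone: its intersection with the unit sphere. -/
def normBase (K : Set E) : Set E := {x ∈ K | ‖x‖ = 1}

/-- Closure of a set with respect to the weak topology `σ(E, E*)`. -/
noncomputable def wClosure (S : Set E) : Set E :=
  (toWeakSpace ℝ E).symm '' closure ((toWeakSpace ℝ E) '' S)

/-- A set is weakly compact if it is compact in the weak topology `σ(E, E*)`. -/
def WeaklyCompact (S : Set E) : Prop :=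
  IsCompact ((toWeakSpace ℝ E) '' S)

/-- A set is weakly closed if it equals its weak closure. -/
noncomputable def WeaklyClosed (S : Set E) : Prop :=
  wClosure S = S

/-- The (topological) dual cone `K⁺`. -/
def dualCone (K : Set E) : Set (E →L[ℝ] ℝ) :=
  {f | ∀ k ∈ K, 0 ≤ f k}

/-- The set `K^#` of functionals strictly positive on `K \ {0}`. -/
def sharpCone (K : Set E) : Set (E →L[ℝ] ℝ) :=
  {f | ∀ k ∈ K, k ≠ 0 → 0 < f k}

/-- The set `K^{w#}` of functionals strictly positive on the weak closure of the norm-base. -/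
noncomputable def wSharpCone (K : Set E) : Set (E →L[ℝ] ℝ) :=
  {f | ∀ x ∈ wClosure (normBase K), 0 < f x}

/-- The algebraic interior (core) of a set in a real vector space. -/
def core {X : Type*} [AddCommGroup X] [Module ℝ X] (Ω : Set X) : Set X :=
  {x ∈ Ω | ∀ v : X, ∃ ε > 0, ∀ t ∈ Set.Icc (0 : ℝ) ε, x + t • v ∈ Ω}

/-- The augmented dual cone `K^{a+}`. -/
def augDualCone (K : Set E) : Set ((E →L[ℝ] ℝ) × ℝ) :=
  {p | 0 ≤ p.2 ∧ ∀ y ∈ K, 0 ≤ p.1 y - p.2 * ‖y‖}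

/-- The set `K^{a#}`. -/
def augSharpCone (K : Set E) : Set ((E →L[ℝ] ℝ) × ℝ) :=
  {p | 0 ≤ p.2 ∧ p.1 ∈ sharpCone K ∧ ∀ y ∈ K, y ≠ 0 → 0 < p.1 y - p.2 * ‖y‖}

/-- The set `K^{aw#}`. -/
noncomputable def augWSharpCone (K : Set E) : Set ((E →L[ℝ] ℝ) × ℝ) :=
  {p | 0 ≤ p.2 ∧ p.1 ∈ sharpCone K ∧ ∀ y ∈ wClosure (normBase K), p.2 < p.1 y}

/-- `S_C = conv(B_C)`. -/
noncomputable def convBase (C : Set E) : Set E := convexHull ℝ (normBase C)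

/-- `S_C^0 = conv({0} ∪ B_C)`. -/
noncomputable def convBase0 (C : Set E) : Set E := convexHull ℝ ({0} ∪ normBase C)

/-!
A functional that is positive on the weakly compact set `cl_w B_K` is weakly continuous, hence
bounded below there by some `m > 0`; the half-space `{f ≥ m}` is convex and norm closed, so it
contains `cl S_K`, which therefore misses `0`. Conversely, if `0 ∉ cl S_K`, Hahn–Banach separates
`0` from the closed convex set `cl S_K` by some `f` with `f ≥ u > 0` on `B_K`, and this bound passes
to the weak closure of `B_K`. Finally `(f, 0) ∈ K^{aw#}` for every `f ∈ K^{w#}`, because every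
nonzero point of `K` is a positive multiple of a point of `B_K`.
-/

theorem subset_wClosure (S : Set E) : S ⊆ wClosure S := fun x hx =>
  ⟨toWeakSpace ℝ E x, subset_closure ⟨x, hx, rfl⟩, (toWeakSpace ℝ E).symm_apply_apply x⟩

theorem continuous_comp_toWeakSpace_symm (f : E →L[ℝ] ℝ) :
    Continuous fun z : WeakSpace ℝ E => f ((toWeakSpace ℝ E).symm z) :=
  WeakBilin.eval_continuous (topDualPairing ℝ E).flip f

theorem wClosure_subset_setOf_le {S : Set E} {f : E →L[ℝ] ℝ} {u : ℝ}
    (h : S ⊆ {x | u ≤ f x}) : wClosure S ⊆ {x | u ≤ f x} := by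
  rintro _ ⟨z, hz, rfl⟩
  refine closure_minimal ?_ (isClosed_le continuous_const (continuous_comp_toWeakSpace_symm f)) hz
  rintro _ ⟨x, hx, rfl⟩
  simpa using h hx

theorem WeaklyCompact.exists_forall_le' {S : Set E} (hS : WeaklyCompact S) (f : E →L[ℝ] ℝ)
    {a : ℝ} (h : ∀ x ∈ S, a < f x) : ∃ a', a < a' ∧ ∀ x ∈ S, a' ≤ f x := by
  obtain ⟨a', ha', hle⟩ := IsCompact.exists_forall_le' hS
    (continuous_comp_toWeakSpace_symm f).continuousOn (a := a) (by simpa using h)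
  exact ⟨a', ha', by simpa using hle⟩

theorem IsCone.inv_norm_smul_mem_normBase {K : Set E} (hK : IsCone K) {k : E} (hk : k ∈ K)
    (hk0 : k ≠ 0) : ‖k‖⁻¹ • k ∈ normBase K :=
  ⟨hK.2 _ (by positivity) k hk, norm_smul_inv_norm hk0⟩

theorem IsCone.mem_sharpCone {K : Set E} (hK : IsCone K) {f : E →L[ℝ] ℝ}
    (hf : ∀ x ∈ normBase K, 0 < f x) : f ∈ sharpCone K := by
  intro k hk hk0
  have hpos := hf _ (hK.inv_norm_smul_mem_normBase hk hk0)
  rw [map_smul, smul_eq_mul] at hpos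
  simpa [hk0] using hpos

theorem zero_notMem_closure_convexHull {S : Set E} {f : E →L[ℝ] ℝ} {m : ℝ} (hm : 0 < m)
    (h : ∀ x ∈ S, m ≤ f x) : (0 : E) ∉ closure (convexHull ℝ S) := by
  have hhalf : closure (convexHull ℝ S) ⊆ {x | m ≤ f x} :=
    closure_minimal (convexHull_min h (convex_halfSpace_ge f.isLinear m))
      (isClosed_le continuous_const f.continuous)
  intro h0
  simpa using (hhalf h0).trans_lt' hm

theorem exists_forall_pos_wClosure_of_zero_notMem {S : Set E}
    (h : (0 : E) ∉ closure (convexHull ℝ S)) : ∃ f : E →L[ℝ] ℝ, ∀ x ∈ wClosure S, 0 < f x := by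
  obtain ⟨f, u, hu, hsep⟩ :=
    geometric_hahn_banach_point_closed (convex_convexHull ℝ S).closure isClosed_closure h
  have hS : S ⊆ {x | u ≤ f x} := fun x hx =>
    (hsep x (subset_closure (subset_convexHull ℝ S hx))).le
  exact ⟨f, fun x hx => (map_zero f ▸ hu).trans_le (wClosure_subset_setOf_le hS hx)⟩

theorem stmt9 (K : Set E) (hK : IsNontrivialCone K)
    (hcomp : WeaklyCompact (wClosure (normBase K))) :
    List.TFAE [
      (wSharpCone K).Nonempty,
      (augWSharpCone K).Nonempty,
      (0 : E) ∉ closure (convBase K)] := by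
  tfae_have 1 → 2 := fun ⟨f, hf⟩ =>
    ⟨(f, 0), le_rfl, hK.1.mem_sharpCone fun x hx => hf x (subset_wClosure _ hx), hf⟩
  tfae_have 2 → 1 := fun ⟨⟨f, a⟩, ha, _, hfa⟩ => ⟨f, fun x hx => ha.trans_lt (hfa x hx)⟩
  tfae_have 1 → 3 := by
    rintro ⟨f, hf⟩
    obtain ⟨m, hm, hmf⟩ := hcomp.exists_forall_le' f hf
    exact zero_notMem_closure_convexHull hm fun x hx => hmf x (subset_wClosure _ hx)
  tfae_have 3 → 1 := exists_forall_pos_wClosure_of_zero_notMem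
  tfae_finish
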